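/- arXiv:2207.04278 — 4 statements merged into one kernel-verified Lean document; each statement's English description precedes it below -/
import Mathlib

section
/- Let A = I, C = [[λ, -μ],[μ, λ]] with μ ≠ 0 (complex conjugate eigenvalues λ ± iμ), and B ∈ M₂(ℝ) arbitrary. Then the identity det(Iξ² + 2Bξη + Cη²) = (ξ² + η²)(ξ² + κ²η²) cannot hold as polynomials in ξ, η for any real κ > 0. -/
/-!
For `2 × 2` matrices, `det (ξ² I + 2ξη B + η² C)` has `ξ³η`-coefficient `2 tr B` and
`ξη³`-coefficient `2 (tr B tr C - tr (B C))`. Matching with `(ξ² + η²)(ξ² + κ²η²)` kills both;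
for `C = !![λ, -μ; μ, λ]` with `μ ≠ 0` this makes `B` traceless and symmetric, hence `det B ≤ 0`.
The `ξ²η²` and `η⁴` coefficients give `2λ + 4 det B = 1 + κ²` and `λ² + μ² = κ²`, i.e.
`4 det B = (1 - λ)² + μ² > 0`.
-/

open Matrix

theorem Matrix.det_fin_two_smul_one_add_smul_add_smul {R : Type*} [CommRing R]
    (a b c : R) (B C : Matrix (Fin 2) (Fin 2) R) :
    (a • (1 : Matrix (Fin 2) (Fin 2) R) + b • B + c • C).det =
      a ^ 2 + a * b * B.trace + a * c * C.trace + b ^ 2 * B.det + c ^ 2 * C.det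
        + b * c * (B.trace * C.trace - (B * C).trace) := by
  simp only [det_fin_two, add_apply, smul_apply, one_apply_eq, smul_eq_mul, mul_one, ne_eq,
    zero_ne_one, not_false_eq_true, one_apply_ne, mul_zero, zero_add, one_ne_zero, trace_fin_two,
    mul_apply, Fin.sum_univ_two]
  ring

theorem binary_quartic_coeffs_eq_zero {K : Type*} [Field K] [CharZero K] {c₀ c₁ c₂ c₃ c₄ : K}
    (h : ∀ x y : K, c₀ * x ^ 4 + c₁ * x ^ 3 * y + c₂ * x ^ 2 * y ^ 2 + c₃ * x * y ^ 3
      + c₄ * y ^ 4 = 0) :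
    c₀ = 0 ∧ c₁ = 0 ∧ c₂ = 0 ∧ c₃ = 0 ∧ c₄ = 0 := by
  have h₀ := h 1 0
  have h₁ := h 1 1
  have h₂ := h (-1) 1
  have h₃ := h 2 1
  have h₄ := h (-2) 1
  have h₅ := h 0 1
  norm_num at h₀ h₁ h₂ h₃ h₄ h₅
  refine ⟨h₀, ?_, ?_, ?_, h₅⟩
  · linear_combination (h₃ - h₄ - 2 * h₁ + 2 * h₂) / 12
  · linear_combination (h₁ + h₂) / 2 - h₀ - h₅
  · linear_combination (8 * h₁ - 8 * h₂ - h₃ + h₄) / 12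

theorem Matrix.det_nonpos_of_trace_eq_zero_of_trace_mul_eq_zero {K : Type*} [Field K]
    [LinearOrder K] [IsStrictOrderedRing K] {lam mu : K} (hm : mu ≠ 0)
    {B : Matrix (Fin 2) (Fin 2) K} (htr : B.trace = 0)
    (htr_mul : (B * !![lam, -mu; mu, lam]).trace = 0) :
    B.det ≤ 0 := by
  rw [trace_fin_two] at htr
  have hB : B 1 1 = -B 0 0 := by linear_combination htr
  have hskew : mu * (B 0 1 - B 1 0) = 0 := by
    simp only [trace_fin_two, mul_apply, of_apply, cons_val', cons_val_zero, cons_val_fin_one,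
      Fin.sum_univ_two, cons_val_one, mul_neg] at htr_mul
    linear_combination htr_mul - lam * htr
  have hsymm : B 1 0 = B 0 1 :=
    (sub_eq_zero.mp ((mul_eq_zero.mp hskew).resolve_left hm)).symm
  rw [det_fin_two, hB, hsymm]
  nlinarith [sq_nonneg (B 0 0), sq_nonneg (B 0 1)]

theorem stmt5_general (lam mu : ℝ) (hm : mu ≠ 0) (B : Matrix (Fin 2) (Fin 2) ℝ) (κ : ℝ) :
    ¬ (∀ ξ η : ℝ,
      (ξ ^ 2 • (1 : Matrix (Fin 2) (Fin 2) ℝ) + (2 * ξ * η) • B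
        + η ^ 2 • !![lam, -mu; mu, lam]).det = (ξ ^ 2 + η ^ 2) * (ξ ^ 2 + κ ^ 2 * η ^ 2)) := by
  intro h
  set C : Matrix (Fin 2) (Fin 2) ℝ := !![lam, -mu; mu, lam]
  obtain ⟨-, htrB, hmid, hmix, hdetC⟩ := binary_quartic_coeffs_eq_zero (c₀ := 0)
      (c₁ := 2 * B.trace) (c₂ := C.trace + 4 * B.det - (1 + κ ^ 2))
      (c₃ := 2 * (B.trace * C.trace - (B * C).trace)) (c₄ := C.det - κ ^ 2) fun ξ η => by
    have := h ξ η
    rw [det_fin_two_smul_one_add_smul_add_smul] at this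
    linear_combination this
  have htrB' : B.trace = 0 := by linear_combination htrB / 2
  have hdetB : B.det ≤ 0 := det_nonpos_of_trace_eq_zero_of_trace_mul_eq_zero hm htrB' (by
    rw [htrB'] at hmix; linear_combination -hmix / 2)
  have htrC : C.trace = 2 * lam := by simp [C, trace_fin_two, two_mul]
  have hdetC' : C.det = lam ^ 2 + mu ^ 2 := by simp [C, det_fin_two, sq]
  have hmu : 0 < mu ^ 2 := by positivity
  rw [htrC] at hmid
  rw [hdetC'] at hdetC
  nlinarith [sq_nonneg (1 - lam)]

/-- When `C = [[λ, -μ],[μ, λ]]` with `μ ≠ 0` (complex conjugate eigenvalues), the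
characteristic form of the system `(I, B, C)` can never equal `(ξ² + η²)(ξ² + κ²η²)`. -/
theorem stmt5 (lam mu : ℝ) (hm : mu ≠ 0) (B : Matrix (Fin 2) (Fin 2) ℝ) (κ : ℝ) (hκ : 0 < κ) :
    ¬ (∀ ξ η : ℝ,
      (ξ ^ 2 • (1 : Matrix (Fin 2) (Fin 2) ℝ) + (2 * ξ * η) • B
        + η ^ 2 • !![lam, -mu; mu, lam]).det = (ξ ^ 2 + η ^ 2) * (ξ ^ 2 + κ ^ 2 * η ^ 2)) :=
  stmt5_general lam mu hm B κ
end

section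
/- Let A = I, C = [[λ, 1],[0, λ]] with λ ≠ 0 real, and B ∈ M₂(ℝ). If det(Iξ² + 2Bξη + Cη²) = (ξ² + η²)(ξ² + κ²η²) as polynomials in ξ, η for some κ > 0, then B is upper triangular (i.e. its (2,1) entry is zero). -/
open Matrix

/-
Expanding the determinant, the terms of odd degree in `η` are
`2ξη · tr B · (ξ² + λη²) - 2ξη³ · B₁₀`, while the target form is even in `η`.
So the coefficients `2 tr B` of `ξ³η` and `2(λ tr B - B₁₀)` of `ξη³` vanish, whence `B₁₀ = 0`.
-/

theorem det_pencil_jordanBlock_fin_two {R : Type*} [CommRing R] (lam ξ η : R)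
    (B : Matrix (Fin 2) (Fin 2) R) :
    (ξ ^ 2 • (1 : Matrix (Fin 2) (Fin 2) R) + (2 * ξ * η) • B + η ^ 2 • !![lam, 1; 0, lam]).det
      = (ξ ^ 2 + lam * η ^ 2) ^ 2 + 2 * ξ * η * B.trace * (ξ ^ 2 + lam * η ^ 2)
        + 4 * ξ ^ 2 * η ^ 2 * B.det - 2 * ξ * η ^ 3 * B 1 0 := by
  simp only [det_fin_two, trace_fin_two, Matrix.add_apply, Matrix.smul_apply, one_apply_eq,
    one_apply_ne (show (0 : Fin 2) ≠ 1 by decide), one_apply_ne (show (1 : Fin 2) ≠ 0 by decide),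
    of_apply, cons_val', cons_val_zero, cons_val_one, empty_val', cons_val_fin_one, smul_eq_mul]
  ring

theorem det_pencil_jordanBlock_fin_two_sub_neg {R : Type*} [CommRing R] (lam ξ η : R)
    (B : Matrix (Fin 2) (Fin 2) R) :
    (ξ ^ 2 • (1 : Matrix (Fin 2) (Fin 2) R) + (2 * ξ * η) • B + η ^ 2 • !![lam, 1; 0, lam]).det
      - (ξ ^ 2 • (1 : Matrix (Fin 2) (Fin 2) R) + (2 * ξ * -η) • B
          + (-η) ^ 2 • !![lam, 1; 0, lam]).det
      = 4 * ξ * η * (B.trace * ξ ^ 2 + (lam * B.trace - B 1 0) * η ^ 2) := by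
  rw [det_pencil_jordanBlock_fin_two, det_pencil_jordanBlock_fin_two]
  ring

theorem eq_zero_of_forall_mul_add_mul_pow_three_eq_zero {K : Type*} [Field K] [CharZero K]
    {a b : K} (h : ∀ x : K, a * x + b * x ^ 3 = 0) : a = 0 ∧ b = 0 := by
  have h1 := h 1
  have h2 := h 2
  have hb : b = 0 := by
    have : (6 : K) * b = 0 := by linear_combination h2 - 2 * h1
    simpa using this
  exact ⟨by linear_combination h1 - hb, hb⟩

theorem stmt6_general (lam : ℝ) (B : Matrix (Fin 2) (Fin 2) ℝ) (κ : ℝ)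
    (h : ∀ ξ η : ℝ,
      (ξ ^ 2 • (1 : Matrix (Fin 2) (Fin 2) ℝ) + (2 * ξ * η) • B
        + η ^ 2 • !![lam, 1; 0, lam]).det = (ξ ^ 2 + η ^ 2) * (ξ ^ 2 + κ ^ 2 * η ^ 2)) :
    B 1 0 = 0 := by
  have hodd : ∀ η : ℝ, (4 * B.trace) * η + (4 * (lam * B.trace - B 1 0)) * η ^ 3 = 0 := by
    intro η
    have hdiff := det_pencil_jordanBlock_fin_two_sub_neg lam 1 η B
    rw [h, h] at hdiff
    linear_combination -hdiff
  obtain ⟨htr, hcoef⟩ := eq_zero_of_forall_mul_add_mul_pow_three_eq_zero hodd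
  linear_combination lam * htr / 4 - hcoef / 4

/-- When `C = [[λ, 1],[0, λ]]` is a nontrivial Jordan block (`λ ≠ 0` real) and the
characteristic form of the system `(I, B, C)` equals `(ξ² + η²)(ξ² + κ²η²)` for some
`κ > 0`, then `B` is upper triangular. -/
theorem stmt6 (lam : ℝ) (hl : lam ≠ 0) (B : Matrix (Fin 2) (Fin 2) ℝ) (κ : ℝ) (hκ : 0 < κ)
    (h : ∀ ξ η : ℝ,
      (ξ ^ 2 • (1 : Matrix (Fin 2) (Fin 2) ℝ) + (2 * ξ * η) • B
        + η ^ 2 • !![lam, 1; 0, lam]).det = (ξ ^ 2 + η ^ 2) * (ξ ^ 2 + κ ^ 2 * η ^ 2)) :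
    B 1 0 = 0 :=
  stmt6_general lam B κ h
end

section
/- Let 0 ≤ τ < σ < 1. Define the symmetric 4×4 block matrix E = [[K, L],[Lᵗ, M]] with K = (1+τ)·diag((1+σ)(σ+τ), (1-σ)(σ-τ)), M = (1-τ)·diag((1-σ)(σ+τ), (1+σ)(σ-τ)), and L = [[0, (1+σ)(τ²-σ²)],[(1-σ)(τ²-σ²), 0]]. Then E is positive semidefinite. -/
/-!
Pairing the coordinates as `(x₁, x₄)` and `(x₂, x₃)`, the quadratic form of `E` splits as
`(1 + σ) F(x₁, x₄) + (1 - σ) G(x₂, x₃)` with binary forms `p x² - 2 r x y + q y²` that share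
`r = σ² - τ²` and `p q = (1 - τ²)(σ² - τ²)`. Hence `p q - r² = (σ² - τ²)(1 - σ²) ≥ 0` for both,
so both forms are nonnegative.
-/

open Matrix

theorem binary_quadratic_nonneg {p q r : ℝ} (hp : 0 ≤ p) (hq : 0 ≤ q) (hr : r ^ 2 ≤ p * q)
    (x y : ℝ) : 0 ≤ p * x ^ 2 - 2 * r * x * y + q * y ^ 2 := by
  rcases hp.eq_or_lt with rfl | hp
  · obtain rfl : r = 0 := by nlinarith [sq_nonneg r]
    nlinarith [sq_nonneg y]
  · refine nonneg_of_mul_nonneg_right ?_ hp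
    calc 0 ≤ (p * x - r * y) ^ 2 + (p * q - r ^ 2) * y ^ 2 := by
          have := sub_nonneg.2 hr; positivity
      _ = p * (p * x ^ 2 - 2 * r * x * y + q * y ^ 2) := by ring

/-- For `0 ≤ τ < σ < 1`, the symmetric block matrix `E = [[K, L],[Lᵗ, M]]` built from the
canonical blocks is positive semidefinite. -/
theorem stmt9 (τ σ : ℝ) (h0 : 0 ≤ τ) (h1 : τ < σ) (h2 : σ < 1) :
    (Matrix.fromBlocks
      ((1 + τ) • !![(1 + σ) * (σ + τ), 0; 0, (1 - σ) * (σ - τ)])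
      !![0, (1 + σ) * (τ ^ 2 - σ ^ 2); (1 - σ) * (τ ^ 2 - σ ^ 2), 0]
      (!![0, (1 + σ) * (τ ^ 2 - σ ^ 2); (1 - σ) * (τ ^ 2 - σ ^ 2), 0])ᵀ
      ((1 - τ) • !![(1 - σ) * (σ + τ), 0; 0, (1 + σ) * (σ - τ)])).PosSemidef := by
  rw [posSemidef_iff_dotProduct_mulVec]
  refine ⟨?_, fun v => ?_⟩
  · refine IsHermitian.fromBlocks ?_ (conjTranspose_eq_transpose_of_trivial _) ?_ <;>
      ext i j <;> fin_cases i <;> fin_cases j <;> simp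
  have hdiff : 0 ≤ σ - τ := by linarith
  have hsum : 0 ≤ σ + τ := by linarith
  have hdet : ((σ + τ) * (σ - τ)) ^ 2 ≤ (1 + τ) * (σ + τ) * ((1 - τ) * (σ - τ)) := by
    nlinarith [mul_nonneg (mul_nonneg hsum hdiff) (by nlinarith : (0:ℝ) ≤ 1 - σ ^ 2)]
  have hF := binary_quadratic_nonneg (p := (1 + τ) * (σ + τ)) (q := (1 - τ) * (σ - τ))
    (by positivity) (mul_nonneg (by linarith) hdiff) hdet (v (Sum.inl 0)) (v (Sum.inr 1))
  have hG := binary_quadratic_nonneg (p := (1 + τ) * (σ - τ)) (q := (1 - τ) * (σ + τ))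
    (mul_nonneg (by linarith) hdiff) (mul_nonneg (by linarith) hsum) (hdet.trans_eq (by ring))
    (v (Sum.inl 1)) (v (Sum.inr 0))
  simp only [dotProduct, Pi.star_apply, star_trivial, mulVec, fromBlocks, smul_of, smul_cons,
    smul_eq_mul, mul_zero, smul_empty, of_apply, Fintype.sum_sum_type, Fin.sum_univ_two,
    Sum.elim_inl, cons_val', cons_val_zero, cons_val_fin_one, cons_val_one, Sum.elim_inr,
    transpose_apply]
  convert add_nonneg (mul_nonneg (by linarith : (0:ℝ) ≤ 1 + σ) hF)
    (mul_nonneg (by linarith : (0:ℝ) ≤ 1 - σ) hG) using 1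
  ring
end

section
/- Let κ ∈ (0,1] and λ ∈ [-κ, κ] \ {0, κ²}, and consider the matrices A = I, B = [[0,1],[-(1/4)(1-λ)(1-κ²/λ), 0]], C = diag(λ, κ²/λ). Then the characteristic form det(Aξ² + 2Bξη + Cη²) equals (ξ² + η²)(ξ² + κ²η²), and in particular the system with these matrices is elliptic. -/
/-!
The off-diagonal entries contribute `(1 - λ)(1 - κ²/λ) ξ²η²` to the determinant, and
`λ + κ²/λ + (1 - λ)(1 - κ²/λ) = 1 + κ²`, so the form factors as `(ξ² + η²)(ξ² + κ²η²)`;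
for `κ ≠ 0` both factors vanish only at the origin.
-/

open Matrix

theorem det_charForm_fin_two {R : Type*} [CommRing R] (b c d ξ η : R) :
    (ξ ^ 2 • (1 : Matrix (Fin 2) (Fin 2) R) + (2 * ξ * η) • !![0, 1; b, 0]
      + η ^ 2 • !![c, 0; 0, d]).det
      = (ξ ^ 2 + c * η ^ 2) * (ξ ^ 2 + d * η ^ 2) - 4 * b * ξ ^ 2 * η ^ 2 := by
  rw [det_fin_two]
  simp only [one_fin_two, smul_of, smul_cons, smul_eq_mul, smul_empty, of_add_of, add_cons,
    head_cons, tail_cons, empty_add_empty, of_apply, cons_val_zero, cons_val_one, Matrix.add_apply]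
  ring

theorem det_canonical_charForm {K : Type*} [Field K] [CharZero K] (κ lam ξ η : K)
    (hlam : lam ≠ 0) :
    (ξ ^ 2 • (1 : Matrix (Fin 2) (Fin 2) K)
        + (2 * ξ * η) • !![0, 1; -(1 / 4) * (1 - lam) * (1 - κ ^ 2 / lam), 0]
        + η ^ 2 • !![lam, 0; 0, κ ^ 2 / lam]).det
        = (ξ ^ 2 + η ^ 2) * (ξ ^ 2 + κ ^ 2 * η ^ 2) := by
  rw [det_charForm_fin_two]
  field_simp
  ring

theorem eq_zero_of_sq_add_sq_mul_sq_add_mul_sq_eq_zero {K : Type*} [Field K] [LinearOrder K]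
    [IsStrictOrderedRing K] {κ ξ η : K} (hκ : κ ≠ 0)
    (h : (ξ ^ 2 + η ^ 2) * (ξ ^ 2 + κ ^ 2 * η ^ 2) = 0) : ξ = 0 ∧ η = 0 := by
  rcases mul_eq_zero.mp h with h | h
  · rw [sq, sq] at h
    exact mul_self_add_mul_self_eq_zero.mp h
  · rw [← mul_pow, sq, sq] at h
    obtain ⟨hξ, hκη⟩ := mul_self_add_mul_self_eq_zero.mp h
    exact ⟨hξ, (mul_eq_zero.mp hκη).resolve_left hκ⟩

theorem stmt18_general (κ lam : ℝ) (hκ0 : 0 < κ) (h3 : lam ≠ 0) :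
    (∀ ξ η : ℝ,
      (ξ ^ 2 • (1 : Matrix (Fin 2) (Fin 2) ℝ)
        + (2 * ξ * η) • !![0, 1; -(1 / 4) * (1 - lam) * (1 - κ ^ 2 / lam), 0]
        + η ^ 2 • !![lam, 0; 0, κ ^ 2 / lam]).det
        = (ξ ^ 2 + η ^ 2) * (ξ ^ 2 + κ ^ 2 * η ^ 2)) ∧
    (∀ ξ η : ℝ,
      (ξ ^ 2 • (1 : Matrix (Fin 2) (Fin 2) ℝ)
        + (2 * ξ * η) • !![0, 1; -(1 / 4) * (1 - lam) * (1 - κ ^ 2 / lam), 0]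
        + η ^ 2 • !![lam, 0; 0, κ ^ 2 / lam]).det = 0 → ξ = 0 ∧ η = 0) := by
  have hdet := fun ξ η => det_canonical_charForm κ lam ξ η h3
  exact ⟨hdet, fun ξ η h =>
    eq_zero_of_sq_add_sq_mul_sq_add_mul_sq_eq_zero hκ0.ne' (hdet ξ η ▸ h)⟩

/-- The characteristic form of the canonical system of Proposition 1, with `κ ∈ (0,1]`
and `λ ∈ [-κ,κ] \ {0, κ²}`, equals `(ξ² + η²)(ξ² + κ²η²)`; in particular the system is
elliptic. -/
theorem stmt18 (κ lam : ℝ) (hκ0 : 0 < κ) (hκ1 : κ ≤ 1) (h1 : -κ ≤ lam) (h2 : lam ≤ κ)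
    (h3 : lam ≠ 0) (h4 : lam ≠ κ ^ 2) :
    (∀ ξ η : ℝ,
      (ξ ^ 2 • (1 : Matrix (Fin 2) (Fin 2) ℝ)
        + (2 * ξ * η) • !![0, 1; -(1 / 4) * (1 - lam) * (1 - κ ^ 2 / lam), 0]
        + η ^ 2 • !![lam, 0; 0, κ ^ 2 / lam]).det
        = (ξ ^ 2 + η ^ 2) * (ξ ^ 2 + κ ^ 2 * η ^ 2)) ∧
    (∀ ξ η : ℝ,
      (ξ ^ 2 • (1 : Matrix (Fin 2) (Fin 2) ℝ)
        + (2 * ξ * η) • !![0, 1; -(1 / 4) * (1 - lam) * (1 - κ ^ 2 / lam), 0]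
        + η ^ 2 • !![lam, 0; 0, κ ^ 2 / lam]).det = 0 → ξ = 0 ∧ η = 0) :=
  stmt18_general κ lam hκ0 h3
end
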